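/- Let X be a finite connected simplicial complex and δ a cellular perversity. Let Δ̂ and Δ̂′ be simplices of the first barycentric subdivision X̂ such that Δ̂ is a codimension-1 face of Δ̂′, and suppose Δ̂ ⊆ ^{−δ}Δ and Δ̂′ ⊆ ^{−δ}Δ′ for simplices Δ, Δ′ of X. Then Δ and Δ′ are incident and Δ ≥ Δ′ in the poset Λ(X,δ) (Lemma 3.2.2). -/

import Mathlib

/-!
`Δ` lies in the chain `c'` whose `(-δ)`-maximum is `Δ'`, so `Δ` and `Δ'` are nested and
`δ(Δ') ≤ δ(Δ)`. Complete the smaller one to a full flag of faces of the larger one, with one face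
in each dimension. A cellular perversity is injective and its values on `{0, …, n}` form an
interval of integers, so the flag members of perversity `δ(Δ), δ(Δ) - 1, …, δ(Δ')` exist, are
pairwise incident, start at `Δ` and end at `Δ'`: they form a descending ladder in `Λ(X,δ)`.
-/

/-- An abstract finite simplicial complex on a finite vertex type `V`. -/
structure SComplex (V : Type) [Fintype V] [DecidableEq V] where
  faces : Finset (Finset V)
  nonempty_of_mem : ∀ s ∈ faces, s.Nonempty
  down_closed : ∀ s ∈ faces, ∀ t, t ⊆ s → t.Nonempty → t ∈ faces

namespace SComplex

variable {V : Type} [Fintype V] [DecidableEq V]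

def dime (Δ : Finset V) : ℕ := Δ.card - 1

/-- Two simplices are incident if one is a face of the other. -/
def Incident (Δ Δ' : Finset V) : Prop := Δ ⊆ Δ' ∨ Δ' ⊆ Δ

def Connected (K : SComplex V) : Prop :=
  ∀ Δ ∈ K.faces, ∀ Δ' ∈ K.faces,
    Relation.ReflTransGen (fun s t => s ∈ K.faces ∧ t ∈ K.faces ∧ (s ∩ t).Nonempty) Δ Δ'

def IsLadder (K : SComplex V) (w : Finset V → ℤ) (f : ℕ → Finset V) (r : ℕ) : Prop :=
  (∀ i ≤ r, f i ∈ K.faces) ∧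
  (∀ i < r, Incident (f i) (f (i + 1)) ∧ w (f i) = w (f (i + 1)) + 1)

/-- `Δ ≥ Δ'` in `Λ(X,δ)`. -/
def lamGE (K : SComplex V) (w : Finset V → ℤ) (Δ Δ' : Finset V) : Prop :=
  ∃ (f : ℕ → Finset V) (r : ℕ), IsLadder K w f r ∧ f 0 = Δ ∧ f r = Δ'

/-- A simplex of the first barycentric subdivision `X̂` of `X`: a nonempty chain of
simplices of `X` (identified with the span of their barycenters). -/
def IsBarySimplex (K : SComplex V) (c : Finset (Finset V)) : Prop :=
  c.Nonempty ∧ (∀ Δ ∈ c, Δ ∈ K.faces) ∧ (∀ Δ ∈ c, ∀ Δ' ∈ c, Δ ⊆ Δ' ∨ Δ' ⊆ Δ)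

/-- `Δ` is the member of the chain `c` with strictly largest `μ`-value; its barycenter
is the `μ`-maximal vertex of the corresponding simplex of `X̂`.  The chain `c` spans a
simplex of `X̂` contained in the `μ`-perverse simplex `^μΔ` exactly when this holds. -/
def IsPervMax (μ : Finset V → ℤ) (c : Finset (Finset V)) (Δ : Finset V) : Prop :=
  Δ ∈ c ∧ ∀ Δ' ∈ c, Δ' ≠ Δ → μ Δ' < μ Δ

end SComplex

open SComplex

/-- A cellular perversity. -/
structure CellPerversity where
  d : ℕ → ℤ
  zero : d 0 = 0
  step : ∀ k : ℕ, 1 ≤ k →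
    ((∀ i < k, d i < d k) ∧ (∃ i < k, d k = d i + 1)) ∨
    ((∀ i < k, d k < d i) ∧ (∃ i < k, d k = d i - 1))

def pd {V : Type} [Fintype V] [DecidableEq V] (P : CellPerversity) (Δ : Finset V) : ℤ :=
  P.d (dime Δ)

theorem Finset.exists_flag_through {α : Type*} [DecidableEq α] {s t : Finset α} (hst : s ⊆ t) :
    ∃ F : ℕ → Finset α, Monotone F ∧ (∀ k, F k ⊆ t) ∧ (∀ k ≤ t.card, (F k).card = k) ∧
      F s.card = s ∧ F t.card = t := by
  set L := s.toList ++ (t \ s).toList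
  have hnodup : L.Nodup :=
    s.nodup_toList.append (t \ s).nodup_toList fun x hs hts =>
      (mem_sdiff.1 (mem_toList.1 hts)).2 (mem_toList.1 hs)
  have hL : L.toFinset = t := by
    simp only [L, List.toFinset_append, toList_toFinset, union_sdiff_of_subset hst]
  have hlen : L.length = t.card := by
    rw [← List.toFinset_card_of_nodup hnodup, hL]
  refine ⟨fun k => (L.take k).toFinset, fun k l hkl => ?_, fun k => ?_, fun k hk => ?_, ?_, ?_⟩
  · intro x hx
    simp only [List.mem_toFinset] at hx ⊢
    exact (List.take_sublist_take_left hkl).subset hx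
  · intro x hx
    rw [← hL, List.mem_toFinset]
    exact List.take_subset _ _ (List.mem_toFinset.1 hx)
  · rw [List.toFinset_card_of_nodup (hnodup.sublist (List.take_sublist _ _)), List.length_take,
      hlen, min_eq_left hk]
  · simp only [L, List.take_left' (length_toList s), toList_toFinset]
  · simp only [← hlen, List.take_length, hL]

namespace CellPerversity

variable (P : CellPerversity)

theorem injective : Function.Injective P.d := by
  intro i j hij
  by_contra hne
  rcases Nat.lt_or_gt_of_ne hne with h | h
  · rcases P.step j (by omega) with ⟨hlt, -⟩ | ⟨hlt, -⟩ <;> have := hlt i h <;> omega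
  · rcases P.step i (by omega) with ⟨hlt, -⟩ | ⟨hlt, -⟩ <;> have := hlt j h <;> omega

theorem image_Iic_eq_Icc (n : ℕ) : ∃ lo hi, P.d '' Set.Iic n = Set.Icc lo hi := by
  induction n with
  | zero => exact ⟨P.d 0, P.d 0, by ext; simp [eq_comm]⟩
  | succ n ih =>
    obtain ⟨lo, hi, h⟩ := ih
    have hmem : ∀ v, v ∈ Set.Icc lo hi ↔ ∃ k ≤ n, P.d k = v := fun v => by
      rw [← h]; rfl
    have hlohi : lo ≤ hi := by
      obtain ⟨hlo, hhi⟩ := (hmem (P.d 0)).2 ⟨0, n.zero_le, rfl⟩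
      exact hlo.trans hhi
    obtain ⟨klo, hklo, rfl⟩ := (hmem lo).1 ⟨le_rfl, hlohi⟩
    obtain ⟨khi, hkhi, rfl⟩ := (hmem hi).1 ⟨hlohi, le_rfl⟩
    rw [← Order.succ_eq_add_one, Order.Iic_succ, Order.succ_eq_add_one, Set.image_insert_eq, h]
    rcases P.step (n + 1) (by omega) with ⟨hlt, i, hin, hstep⟩ | ⟨hlt, i, hin, hstep⟩
    · have h1 := hlt khi (by omega)
      have h2 := ((hmem (P.d i)).2 ⟨i, by omega, rfl⟩).2
      refine ⟨P.d klo, P.d khi + 1, ?_⟩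
      ext v
      simp only [Set.mem_insert_iff, Set.mem_Icc]
      omega
    · have h1 := hlt klo (by omega)
      have h2 := ((hmem (P.d i)).2 ⟨i, by omega, rfl⟩).1
      refine ⟨P.d klo - 1, P.d khi, ?_⟩
      ext v
      simp only [Set.mem_insert_iff, Set.mem_Icc]
      omega

theorem exists_eq_of_le_of_le {n i j : ℕ} (hin : i ≤ n) (hjn : j ≤ n) {v : ℤ}
    (hjv : P.d j ≤ v) (hvi : v ≤ P.d i) : ∃ k ≤ n, P.d k = v := by
  obtain ⟨lo, hi, h⟩ := P.image_Iic_eq_Icc n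
  have hmem : ∀ {m}, m ≤ n → P.d m ∈ Set.Icc lo hi := fun hm => h ▸ Set.mem_image_of_mem _ hm
  obtain ⟨k, hk, hkv⟩ : v ∈ P.d '' Set.Iic n :=
    h ▸ ⟨(hmem hjn).1.trans hjv, hvi.trans (hmem hin).2⟩
  exact ⟨k, hk, hkv⟩

end CellPerversity

namespace SComplex

theorem dime_add_one {V : Type} {Δ : Finset V} (h : Δ.Nonempty) : dime Δ + 1 = Δ.card := by
  have := h.card_pos
  unfold dime
  omega

theorem IsPervMax.le {V : Type} {μ : Finset V → ℤ} {c : Finset (Finset V)} {Δ Δ' : Finset V}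
    (h : IsPervMax μ c Δ) (hΔ' : Δ' ∈ c) : μ Δ' ≤ μ Δ := by
  by_cases heq : Δ' = Δ
  · rw [heq]
  · exact (h.2 Δ' hΔ' heq).le

variable {V : Type} [Fintype V] [DecidableEq V] (K : SComplex V)

theorem exists_flag_through {S T : Finset V} (hT : T ∈ K.faces) (hS : S.Nonempty) (hST : S ⊆ T) :
    ∃ G : ℕ → Finset V, Monotone G ∧ (∀ k ≤ dime T, G k ∈ K.faces ∧ dime (G k) = k) ∧
      G (dime S) = S ∧ G (dime T) = T := by
  obtain ⟨F, hmono, hsub, hcard, hFS, hFT⟩ := Finset.exists_flag_through hST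
  have hTS := dime_add_one (hS.mono hST)
  refine ⟨fun k => F (k + 1), fun k l hkl => hmono (by omega), fun k hk => ?_, ?_, ?_⟩
  · have hk' := hcard (k + 1) (by omega)
    refine ⟨K.down_closed T hT _ (hsub _) (Finset.card_pos.1 (hk' ▸ k.succ_pos)), ?_⟩
    simp only [dime, hk', Nat.add_sub_cancel]
  · simp only [dime_add_one hS, hFS]
  · simp only [hTS, hFT]

theorem exists_flag_through_incident {A B : Finset V} (hA : A ∈ K.faces) (hB : B ∈ K.faces)
    (hAB : Incident A B) :
    ∃ (M : ℕ) (G : ℕ → Finset V), Monotone G ∧ (∀ k ≤ M, G k ∈ K.faces ∧ dime (G k) = k) ∧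
      dime A ≤ M ∧ dime B ≤ M ∧ G (dime A) = A ∧ G (dime B) = B := by
  have hdime : ∀ {S T : Finset V}, S ⊆ T → dime S ≤ dime T := fun h =>
    Nat.sub_le_sub_right (Finset.card_le_card h) 1
  rcases hAB with h | h
  · obtain ⟨G, hmono, hG, hGA, hGB⟩ := K.exists_flag_through hB (K.nonempty_of_mem A hA) h
    exact ⟨dime B, G, hmono, hG, hdime h, le_rfl, hGA, hGB⟩
  · obtain ⟨G, hmono, hG, hGB, hGA⟩ := K.exists_flag_through hA (K.nonempty_of_mem B hB) h
    exact ⟨dime A, G, hmono, hG, le_rfl, hdime h, hGA, hGB⟩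

theorem lamGE_of_flag (P : CellPerversity) {M : ℕ} {G : ℕ → Finset V} (hmono : Monotone G)
    (hG : ∀ k ≤ M, G k ∈ K.faces ∧ dime (G k) = k) {a b : ℕ} (ha : a ≤ M) (hb : b ≤ M)
    (hab : P.d b ≤ P.d a) : lamGE K (fun Δ₀ => pd P Δ₀) (G a) (G b) := by
  -- clamped at `δ(b)` so that the choice is made for every `i`, not only for `i ≤ r`
  have hval : ∀ i : ℕ, ∃ k ≤ M, P.d k = max (P.d a - i) (P.d b) := fun i =>
    P.exists_eq_of_le_of_le ha hb (le_max_right _ _) (max_le (by omega) hab)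
  choose k hkM hk using hval
  have hpd : ∀ i, pd P (G (k i)) = max (P.d a - i) (P.d b) := fun i => by
    rw [pd, (hG _ (hkM i)).2, hk]
  set r := (P.d a - P.d b).toNat
  have hr : (r : ℤ) = P.d a - P.d b := Int.toNat_of_nonneg (by omega)
  refine ⟨fun i => G (k i), r, ⟨fun i _ => (hG _ (hkM i)).1, fun i hi => ⟨?_, ?_⟩⟩, ?_, ?_⟩
  · exact (le_total (k i) (k (i + 1))).imp (fun h => hmono h) (fun h => hmono h)
  · have : (i : ℤ) + 1 ≤ r := by exact_mod_cast hi
    simp only [hpd]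
    push_cast
    omega
  · exact congrArg G (P.injective (by rw [hk]; simp [hab]))
  · exact congrArg G (P.injective (by rw [hk]; omega))

theorem lamGE_of_incident (P : CellPerversity) {A B : Finset V} (hA : A ∈ K.faces)
    (hB : B ∈ K.faces) (hAB : Incident A B) (hle : pd P B ≤ pd P A) :
    lamGE K (fun Δ₀ => pd P Δ₀) A B := by
  obtain ⟨M, G, hmono, hG, ha, hb, hGA, hGB⟩ := K.exists_flag_through_incident hA hB hAB
  rw [← hGA, ← hGB]
  exact K.lamGE_of_flag P hmono hG ha hb hle

end SComplex

theorem statement6_general {V : Type} [Fintype V] [DecidableEq V]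
    (K : SComplex V)
    (P : CellPerversity)
    (c c' : Finset (Finset V)) (hc' : IsBarySimplex K c')
    (hface : c ⊆ c')
    (Δ Δ' : Finset V)
    (hmax : IsPervMax (fun Δ₀ => -(pd P Δ₀)) c Δ)
    (hmax' : IsPervMax (fun Δ₀ => -(pd P Δ₀)) c' Δ') :
    Incident Δ Δ' ∧ lamGE K (fun Δ₀ => pd P Δ₀) Δ Δ' := by
  have hΔ : Δ ∈ c' := hface hmax.1
  have hinc : Incident Δ Δ' := hc'.2.2 Δ hΔ Δ' hmax'.1
  have hle : pd P Δ' ≤ pd P Δ := neg_le_neg_iff.1 (hmax'.le hΔ)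
  exact ⟨hinc, K.lamGE_of_incident P (hc'.2.1 Δ hΔ) (hc'.2.1 Δ' hmax'.1) hinc hle⟩

/-- Lemma 3.2.2: let `Δ̂` and `Δ̂'` be simplices of the first barycentric subdivision
`X̂` such that `Δ̂` is a codimension-1 face of `Δ̂'`, with `Δ̂ ⊆ ^{−δ}Δ` and
`Δ̂' ⊆ ^{−δ}Δ'`.  Then `Δ` and `Δ'` are incident and `Δ ≥ Δ'` in `Λ(X,δ)`. -/
theorem statement6 {V : Type} [Fintype V] [DecidableEq V]
    (K : SComplex V) (hne : K.faces.Nonempty) (hconn : K.Connected)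
    (P : CellPerversity)
    (c c' : Finset (Finset V)) (hc : IsBarySimplex K c) (hc' : IsBarySimplex K c')
    (hface : c ⊆ c') (hcodim : c'.card = c.card + 1)
    (Δ Δ' : Finset V)
    (hmax : IsPervMax (fun Δ₀ => -(pd P Δ₀)) c Δ)
    (hmax' : IsPervMax (fun Δ₀ => -(pd P Δ₀)) c' Δ') :
    Incident Δ Δ' ∧ lamGE K (fun Δ₀ => pd P Δ₀) Δ Δ' :=
  statement6_general K P c c' hc' hface Δ Δ' hmax hmax'
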